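/- arXiv:math/0611640 — 5 statements merged into one kernel-verified Lean document; each statement's English description precedes it below -/
import Mathlib

section
/- Let A = A₀ ⊕ A₁ be an associative superalgebra over a field F and D : A → A an F-linear map satisfying D(a·(D b)) = (D a)·(D b) = D((D a)·b) for all a, b ∈ A. Then the product ⟨a, b⟩_D := a·(D b) - (-1)^{αβ}(D b)·a (for homogeneous a ∈ A_α, b ∈ A_β, extended bilinearly) makes A into a Leibniz superalgebra. -/
/-- The bracket `⟨a,b⟩_D = a·(D b) - (-1)^{αβ} (D b)·a` on an associative
superalgebra, with parities `p q`. -/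
def brD (F : Type*) {A : Type*} [Field F] [Ring A] [Algebra F A]
    (D : A →ₗ[F] A) (p q : Bool) (u v : A) : A :=
  u * D v - (cond (p && q) (-1 : F) 1) • (D v * u)

/-- If `D` satisfies `D(a·(D b)) = (D a)·(D b) = D((D a)·b)`, then the product
`⟨a,b⟩_D` makes the associative superalgebra `A` into a Leibniz superalgebra:
the bracket respects the grading and satisfies the graded Leibniz identity. -/
theorem assocSuper_brD_leibnizSuper
    {F A : Type*} [Field F] [Ring A] [Algebra F A]
    (A0 A1 : Submodule F A)
    (hmul : ∀ (a b : Bool), ∀ x ∈ cond a A1 A0, ∀ y ∈ cond b A1 A0,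
      x * y ∈ cond (Bool.xor a b) A1 A0)
    (D : A →ₗ[F] A)
    (hD0 : ∀ (a : Bool), ∀ x ∈ cond a A1 A0, D x ∈ cond a A1 A0)
    (hD1 : ∀ a b : A, D (a * D b) = D a * D b)
    (hD2 : ∀ a b : A, D (D a * b) = D a * D b) :
    (∀ (p q : Bool), ∀ u ∈ cond p A1 A0, ∀ v ∈ cond q A1 A0,
      brD F D p q u v ∈ cond (Bool.xor p q) A1 A0) ∧
    (∀ (c a b : Bool), ∀ x ∈ cond c A1 A0, ∀ y ∈ cond a A1 A0, ∀ z ∈ cond b A1 A0,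
      brD F D c (Bool.xor a b) x (brD F D a b y z)
        = brD F D (Bool.xor c a) b (brD F D c a x y) z
          - (cond (a && b) (-1 : F) 1) • brD F D (Bool.xor c b) a (brD F D c b x z) y) := by
  constructor
  · intro p q u hu v hv
    have hDv := hD0 q v hv
    have h1 := hmul p q u hu (D v) hDv
    have h2 := hmul q p (D v) hDv u hu
    rw [Bool.xor_comm] at h2
    exact Submodule.sub_mem _ h1 (Submodule.smul_mem _ _ h2)
  · intro c a b x _ y _ z _
    simp only [brD, map_sub, LinearMap.map_smul, hD1, hD2]
    cases c <;> cases a <;> cases b <;>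
      simp only [Bool.xor_false, Bool.xor_true, Bool.false_xor, Bool.true_xor, Bool.not_true, Bool.not_false, Bool.false_and, Bool.true_and, Bool.and_false, Bool.and_true, cond_true, cond_false, smul_sub, one_smul, neg_one_smul] <;>
      noncomm_ring
end

section
/- Let L be a finite-dimensional Leibniz superalgebra of dimension d ≥ 1 that is nilpotent with nilindex exactly d + 1 (the maximal possible value, i.e. L^d ≠ 0 and L^{d+1} = 0). Then L is generated by a single element: there exists x ∈ L such that the smallest subsuperalgebra of L containing x equals L. -/
/-- The descending central series: `dcs br 0 = L¹ = L`, `dcs br k = L^{k+1}`. -/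
def dcs (K : Type*) {V : Type*} [Field K] [AddCommGroup V] [Module K V]
    (br : V → V → V) : ℕ → Submodule K V
  | 0 => ⊤
  | k + 1 => Submodule.span K {v : V | ∃ a ∈ dcs K br k, ∃ b : V, v = br a b}

section Aux
variable {V : Type*} [AddCommGroup V] [Module ℂ V]
  (L0 L1 : Submodule ℂ V) (br : V →ₗ[ℂ] V →ₗ[ℂ] V)

lemma dcs_succ_def (k : ℕ) :
    dcs ℂ (fun u v : V => br u v) (k+1) =
      Submodule.span ℂ {v : V | ∃ a ∈ dcs ℂ (fun u v : V => br u v) k, ∃ b : V, v = br a b} := rfl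

lemma mem_dcs_succ {a : V} (b : V) {k : ℕ} (ha : a ∈ dcs ℂ (fun u v : V => br u v) k) :
    br a b ∈ dcs ℂ (fun u v : V => br u v) (k+1) :=
  Submodule.subset_span ⟨a, ha, b, rfl⟩

lemma dcs_mono : ∀ k, dcs ℂ (fun u v : V => br u v) (k+1) ≤ dcs ℂ (fun u v : V => br u v) k
  | 0 => le_top
  | k+1 => by
      rw [dcs_succ_def]
      refine Submodule.span_le.2 ?_
      rintro v ⟨a, ha, b, rfl⟩
      exact mem_dcs_succ br b (dcs_mono k ha)

lemma dcs_graded (hsup : L0 ⊔ L1 = ⊤)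
    (hgrade : ∀ (a b : Bool), ∀ x ∈ cond a L1 L0, ∀ y ∈ cond b L1 L0,
      br x y ∈ cond (Bool.xor a b) L1 L0) :
    ∀ k, dcs ℂ (fun u v : V => br u v) k ≤
      (dcs ℂ (fun u v : V => br u v) k ⊓ L0) ⊔ (dcs ℂ (fun u v : V => br u v) k ⊓ L1)
  | 0 => by
      have h0 : dcs ℂ (fun u v : V => br u v) 0 = ⊤ := rfl
      rw [h0, top_inf_eq, top_inf_eq]
      exact hsup.ge
  | k+1 => by
      rw [dcs_succ_def]
      refine Submodule.span_le.2 ?_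
      rintro v ⟨a, ha, b, rfl⟩
      obtain ⟨a0, ha0, a1, ha1, rfl⟩ := Submodule.mem_sup.1 (dcs_graded hsup hgrade k ha)
      have hb : b ∈ L0 ⊔ L1 := hsup.symm ▸ Submodule.mem_top
      obtain ⟨b0, hb0, b1, hb1, rfl⟩ := Submodule.mem_sup.1 hb
      have hexp : br (a0 + a1) (b0 + b1)
          = br a0 b0 + br a0 b1 + (br a1 b0 + br a1 b1) := by
        simp only [map_add, LinearMap.add_apply]; abel
      rw [SetLike.mem_coe, hexp]
      have h00 : br a0 b0 ∈ _ ⊓ L0 :=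
        ⟨mem_dcs_succ br b0 ha0.1, hgrade false false a0 ha0.2 b0 hb0⟩
      have h01 : br a0 b1 ∈ _ ⊓ L1 :=
        ⟨mem_dcs_succ br b1 ha0.1, hgrade false true a0 ha0.2 b1 hb1⟩
      have h10 : br a1 b0 ∈ _ ⊓ L1 :=
        ⟨mem_dcs_succ br b0 ha1.1, hgrade true false a1 ha1.2 b0 hb0⟩
      have h11 : br a1 b1 ∈ _ ⊓ L0 :=
        ⟨mem_dcs_succ br b1 ha1.1, hgrade true true a1 ha1.2 b1 hb1⟩
      exact add_mem (add_mem (Submodule.mem_sup_left h00) (Submodule.mem_sup_right h01))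
        (add_mem (Submodule.mem_sup_right h10) (Submodule.mem_sup_left h11))

lemma dcs_br (hsup : L0 ⊔ L1 = ⊤)
    (hgrade : ∀ (a b : Bool), ∀ x ∈ cond a L1 L0, ∀ y ∈ cond b L1 L0,
      br x y ∈ cond (Bool.xor a b) L1 L0)
    (hleib : ∀ (a b : Bool) (x : V), ∀ y ∈ cond a L1 L0, ∀ z ∈ cond b L1 L0,
      br x (br y z) = br (br x y) z - (cond (a && b) (-1 : ℂ) 1) • br (br x z) y) :
    ∀ (j i : ℕ) (x : V), x ∈ dcs ℂ (fun u v : V => br u v) i →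
      ∀ y ∈ dcs ℂ (fun u v : V => br u v) j,
        br x y ∈ dcs ℂ (fun u v : V => br u v) (i + j + 1) := by
  intro j
  induction j with
  | zero => intro i x hx y _; exact mem_dcs_succ br y hx
  | succ j ih =>
    intro i x hx y hy
    have hle : dcs ℂ (fun u v : V => br u v) (j+1) ≤
        Submodule.comap (br x) (dcs ℂ (fun u v : V => br u v) (i + (j+1) + 1)) := by
      rw [dcs_succ_def]
      refine Submodule.span_le.2 ?_
      rintro v ⟨a, ha, b, rfl⟩
      obtain ⟨a0, ha0, a1, ha1, rfl⟩ :=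
        Submodule.mem_sup.1 (dcs_graded L0 L1 br hsup hgrade j ha)
      have hb : b ∈ L0 ⊔ L1 := hsup.symm ▸ Submodule.mem_top
      obtain ⟨b0, hb0, b1, hb1, rfl⟩ := Submodule.mem_sup.1 hb
      have key : ∀ (s t : Bool) (u w : V), u ∈ dcs ℂ (fun u v : V => br u v) j →
          u ∈ cond s L1 L0 → w ∈ cond t L1 L0 →
          br x (br u w) ∈ dcs ℂ (fun u v : V => br u v) (i + (j+1) + 1) := by
        intro s t u w hu hus hwt
        rw [hleib s t x u hus w hwt]
        refine sub_mem ?_ (Submodule.smul_mem _ _ ?_)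
        · have h1 : br x u ∈ dcs ℂ (fun u v : V => br u v) (i + j + 1) := ih i x hx u hu
          have h2 := mem_dcs_succ br w h1
          have : i + j + 1 + 1 = i + (j + 1) + 1 := by omega
          rwa [this] at h2
        · have h1 : br x w ∈ dcs ℂ (fun u v : V => br u v) (i + 1) := mem_dcs_succ br w hx
          have h2 := ih (i+1) (br x w) h1 u hu
          have : i + 1 + j + 1 = i + (j + 1) + 1 := by omega
          rwa [this] at h2
      have hexp : br x (br (a0 + a1) (b0 + b1))
          = br x (br a0 b0) + br x (br a0 b1) + (br x (br a1 b0) + br x (br a1 b1)) := by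
        simp only [map_add, LinearMap.add_apply]; abel
      rw [SetLike.mem_coe, Submodule.mem_comap, hexp]
      exact add_mem (add_mem (key false false a0 b0 ha0.1 ha0.2 hb0)
          (key false true a0 b1 ha0.1 ha0.2 hb1))
        (add_mem (key true false a1 b0 ha1.1 ha1.2 hb0)
          (key true true a1 b1 ha1.1 ha1.2 hb1))
    exact hle hy

end Aux

/-- A `d`-dimensional Leibniz superalgebra (`d ≥ 1`) of maximal nilindex
`d + 1` (i.e. `L^d ≠ 0`, `L^{d+1} = 0`) is generated by a single element. -/
theorem maximal_nilindex_single_generated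
    {V : Type*} [AddCommGroup V] [Module ℂ V] [FiniteDimensional ℂ V]
    (L0 L1 : Submodule ℂ V) (br : V →ₗ[ℂ] V →ₗ[ℂ] V)
    (hsup : L0 ⊔ L1 = ⊤) (hinf : L0 ⊓ L1 = ⊥)
    (hgrade : ∀ (a b : Bool), ∀ x ∈ cond a L1 L0, ∀ y ∈ cond b L1 L0,
      br x y ∈ cond (Bool.xor a b) L1 L0)
    (hleib : ∀ (a b : Bool) (x : V), ∀ y ∈ cond a L1 L0, ∀ z ∈ cond b L1 L0,
      br x (br y z) = br (br x y) z - (cond (a && b) (-1 : ℂ) 1) • br (br x z) y)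
    (d : ℕ) (hd : 1 ≤ d) (hdim : Module.finrank ℂ V = d)
    (hnil : dcs ℂ (fun u v => br u v) d = ⊥)
    (hnil' : dcs ℂ (fun u v => br u v) (d - 1) ≠ ⊥) :
    ∃ x : V, ∀ P : Submodule ℂ V,
      x ∈ P → (∀ a ∈ P, ∀ b ∈ P, br a b ∈ P) → P = ⊤ := by
  set D : ℕ → Submodule ℂ V := dcs ℂ (fun u v : V => br u v) with hD
  -- the recursion step depends only on the previous term
  have hcongr : ∀ k m : ℕ, D k = D m → D (k+1) = D (m+1) := by
    intro k m h
    rw [hD, dcs_succ_def, dcs_succ_def, ← hD, h]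
  have hstable : ∀ k, D (k+1) = D k → ∀ m, D (k + m) = D k := by
    intro k h m
    induction m with
    | zero => rfl
    | succ m ih =>
      have : D (k + m + 1) = D (k + 1) := hcongr _ _ ih
      rw [show k + (m+1) = k + m + 1 by omega, this, h]
  -- the series is strictly decreasing below d
  have hlt : ∀ k, k < d → D (k+1) < D k := by
    intro k hk
    refine lt_of_le_of_ne (dcs_mono br k) ?_
    intro heq
    have h1 := hstable k heq (d - 1 - k)
    have h2 := hstable k heq (d - k)
    rw [show k + (d - 1 - k) = d - 1 by omega] at h1
    rw [show k + (d - k) = d by omega] at h2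
    exact hnil' (by rw [h1, ← h2, hnil])
  have hr0 : Module.finrank ℂ (D 0) = d := by
    have : D 0 = ⊤ := rfl
    rw [this, finrank_top]; exact hdim
  have hstep : ∀ k, k < d → Module.finrank ℂ (D (k+1)) < Module.finrank ℂ (D k) := by
    intro k hk
    exact Submodule.finrank_lt_finrank_of_lt (hlt k hk)
  have hlow : ∀ j, j ≤ d → j ≤ Module.finrank ℂ (D (d - j)) := by
    intro j
    induction j with
    | zero => intro _; exact Nat.zero_le _
    | succ j ih =>
      intro hj
      have h1 := ih (by omega)
      have h2 := hstep (d - (j+1)) (by omega)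
      rw [show d - (j+1) + 1 = d - j by omega] at h2
      omega
  have hr1lt : Module.finrank ℂ (D 1) < d := by
    have h := hstep 0 hd
    rw [Nat.zero_add] at h
    omega
  have hr1 : Module.finrank ℂ (D 1) = d - 1 := by
    have h1 := hlow (d - 1) (by omega)
    rw [show d - (d - 1) = 1 by omega] at h1
    omega
  -- pick a generator outside D 1
  have hne : ∃ x : V, x ∉ D 1 := by
    by_contra h
    push_neg at h
    have : D 1 = ⊤ := Submodule.eq_top_iff'.2 h
    rw [this, finrank_top, hdim] at hr1
    omega
  obtain ⟨x, hx1⟩ := hne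
  refine ⟨x, fun P hxP hcl => ?_⟩
  -- span x ⊔ D 1 = ⊤
  have hQ : Submodule.span ℂ {x} ⊔ D 1 = ⊤ := by
    apply Submodule.eq_top_of_finrank_eq
    have hlt' : D 1 < Submodule.span ℂ {x} ⊔ D 1 := by
      refine lt_of_le_of_ne le_sup_right ?_
      intro h
      exact hx1 (h ▸ Submodule.mem_sup_left (Submodule.mem_span_singleton_self x))
    have h1 := Submodule.finrank_lt_finrank_of_lt hlt'
    have h2 : Module.finrank ℂ ↥(Submodule.span ℂ {x} ⊔ D 1) ≤ Module.finrank ℂ V :=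
      Submodule.finrank_le _
    omega
  have hP1 : P ⊔ D 1 = ⊤ := by
    rw [eq_top_iff, ← hQ]
    exact sup_le_sup_right (Submodule.span_le.2 (by simpa using hxP)) _
  have hPD : ∀ k, P ⊔ D (k+1) = ⊤ := by
    intro k
    induction k with
    | zero => exact hP1
    | succ k ih =>
      have hsub : D (k+1) ≤ P ⊔ D (k+2) := by
        rw [hD, dcs_succ_def, ← hD]
        refine Submodule.span_le.2 ?_
        rintro v ⟨a, ha, b, rfl⟩
        have hha : a ∈ P ⊔ D (k+1) := ih ▸ Submodule.mem_top
        have hhb : b ∈ P ⊔ D (k+1) := ih ▸ Submodule.mem_top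
        obtain ⟨p, hp, a', ha', rfl⟩ := Submodule.mem_sup.1 hha
        obtain ⟨q, hq, b', hb', rfl⟩ := Submodule.mem_sup.1 hhb
        have hexp : br (p + a') (q + b')
            = br p q + (br p b' + (br a' q + br a' b')) := by
          simp only [map_add, LinearMap.add_apply]; abel
        rw [SetLike.mem_coe, hexp]
        refine add_mem (Submodule.mem_sup_left (hcl p hp q hq)) (add_mem ?_ (add_mem ?_ ?_))
        · have h1 : p ∈ D 0 := Submodule.mem_top
          have h2 := dcs_br L0 L1 br hsup hgrade hleib (k+1) 0 p h1 b' hb'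
          rw [show 0 + (k+1) + 1 = k + 2 by omega] at h2
          exact Submodule.mem_sup_right h2
        · exact Submodule.mem_sup_right (mem_dcs_succ br q ha')
        · exact Submodule.mem_sup_right (mem_dcs_succ br b' ha')
      rw [eq_top_iff, ← ih]
      calc P ⊔ D (k+1) ≤ P ⊔ (P ⊔ D (k+2)) := sup_le_sup_left hsub P
        _ = P ⊔ D (k+2) := by rw [← sup_assoc, sup_idem]
  have := hPD (d - 1)
  rw [show d - 1 + 1 = d by omega, hnil, sup_bot_eq] at this
  exact this
end

section
/- Let L be a single-generated (one-generated) finite-dimensional nilpotent Leibniz superalgebra over ℂ of dimension n + m with dim L₀ = n and dim L₁ = m, generated by an odd element, and of maximal nilindex n + m + 1. Then m = n or m = n + 1; specifically, if n + m is even then m = n, and if n + m is odd then m = n + 1. -/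
open Submodule

theorem finrank_le_card_of_codisjoint_span {K V ι κ : Type*} [Field K] [AddCommGroup V]
    [Module K V] [Fintype ι] {L0 L1 : Submodule K V} (hdisj : Disjoint L0 L1) {e : ι → V}
    {o : κ → V} (hcod : Codisjoint (span K (Set.range e)) (span K (Set.range o)))
    (he : ∀ i, e i ∈ L1) (ho : ∀ i, o i ∈ L0) :
    Module.finrank K L1 ≤ Fintype.card ι := by
  have hE : span K (Set.range e) ≤ L1 := span_le.2 (Set.range_subset_iff.2 he)
  have hO : Disjoint (span K (Set.range o)) L1 :=
    hdisj.mono_left (span_le.2 (Set.range_subset_iff.2 ho))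
  rw [← (le_iff_eq_of_codisjoint_of_disjoint hcod hO).1 hE]
  exact finrank_range_le_card e

namespace LeibnizSuperalgebra

variable {K V : Type*} [Field K] [AddCommGroup V] [Module K V]
  (br : V →ₗ[K] V →ₗ[K] V) (y : V)

/-- `rightPow br y k = y^{k+1}`. -/
def rightPow : ℕ → V
  | 0 => y
  | k + 1 => br (rightPow k) y

def powTail (c : ℕ) : Submodule K V :=
  span K (rightPow br y '' Set.Ici c)

variable {br y}

theorem rightPow_mem_powTail {c j : ℕ} (h : c ≤ j) : rightPow br y j ∈ powTail br y c :=
  subset_span ⟨j, h, rfl⟩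

theorem powTail_antitone : Antitone (powTail br y) := fun _ _ h =>
  span_mono (Set.image_mono fun _ hj => le_trans h hj)

theorem br_mem_powTail_succ_of_generators {c : ℕ} {I : Set ℕ}
    (h : ∀ j ≥ c, ∀ i ∈ I, br (rightPow br y j) (rightPow br y i) ∈ powTail br y (c + 1))
    {a b : V} (ha : a ∈ powTail br y c) (hb : b ∈ span K (rightPow br y '' I)) :
    br a b ∈ powTail br y (c + 1) := by
  have hab := apply_mem_map₂ br ha hb
  rw [powTail, map₂_span_span] at hab
  refine span_le.2 ?_ hab
  rintro _ ⟨_, ⟨j, hj, rfl⟩, _, ⟨i, hi, rfl⟩, rfl⟩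
  exact h j hj i hi

theorem br_right_mem_powTail_succ {c : ℕ} {x : V} (hx : x ∈ powTail br y c) :
    br x y ∈ powTail br y (c + 1) :=
  br_mem_powTail_succ_of_generators (I := {0})
    (fun j hj i hi => by
      rw [Set.mem_singleton_iff.1 hi]
      exact rightPow_mem_powTail (Nat.succ_le_succ hj))
    hx (subset_span ⟨0, rfl, rfl⟩)

theorem codisjoint_span_even_span_odd (htop : powTail br y 0 = ⊤) {N : ℕ}
    (hzero : ∀ j, N ≤ j → rightPow br y j = 0) :
    Codisjoint (span K (Set.range fun i : Fin ((N + 1) / 2) => rightPow br y (2 * i)))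
      (span K (Set.range fun i : Fin (N / 2) => rightPow br y (2 * i + 1))) := by
  rw [codisjoint_iff, eq_top_iff, ← htop, powTail, span_le]
  rintro _ ⟨j, -, rfl⟩
  by_cases hj : N ≤ j
  · rw [hzero j hj]
    exact zero_mem _
  obtain ⟨i, rfl | rfl⟩ := Nat.even_or_odd' j
  · exact mem_sup_left (subset_span ⟨⟨i, by omega⟩, rfl⟩)
  · exact mem_sup_right (subset_span ⟨⟨i, by omega⟩, rfl⟩)

section Graded

variable {L0 L1 : Submodule K V} (hy : y ∈ L1)
  (hgrade : ∀ (a b : Bool), ∀ x ∈ cond a L1 L0, ∀ y ∈ cond b L1 L0,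
    br x y ∈ cond (Bool.xor a b) L1 L0)
include hy hgrade

theorem rightPow_mem_cond (k : ℕ) : rightPow br y k ∈ cond (decide (Even k)) L1 L0 := by
  induction k with
  | zero => simpa [rightPow] using hy
  | succ k ih =>
    simp only [Nat.even_add_one, decide_not, ← Bool.xor_true]
    exact hgrade _ true _ ih y hy

theorem rightPow_two_mul_mem (i : ℕ) : rightPow br y (2 * i) ∈ L1 := by
  simpa using rightPow_mem_cond hy hgrade (2 * i)

theorem rightPow_two_mul_add_one_mem (i : ℕ) : rightPow br y (2 * i + 1) ∈ L0 := by
  simpa [Nat.even_add_one] using rightPow_mem_cond hy hgrade (2 * i + 1)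

variable (hleib : ∀ (a b : Bool) (x : V), ∀ y ∈ cond a L1 L0, ∀ z ∈ cond b L1 L0,
  br x (br y z) = br (br x y) z - (cond (a && b) (-1 : K) 1) • br (br x z) y)
include hleib

theorem br_rightPow_mem_powTail (i j : ℕ) :
    br (rightPow br y j) (rightPow br y i) ∈ powTail br y (j + i + 1) := by
  induction i generalizing j with
  | zero => exact rightPow_mem_powTail le_rfl
  | succ i ih =>
    change br (rightPow br y j) (br (rightPow br y i) y) ∈ _
    rw [hleib _ true _ _ (rightPow_mem_cond hy hgrade i) y hy]
    refine sub_mem (br_right_mem_powTail_succ (ih j)) (smul_mem _ _ ?_)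
    have h := ih (j + 1)
    rwa [show j + 1 + i + 1 = j + (i + 1) + 1 by omega] at h

theorem br_mem_powTail_succ {c : ℕ} {a b : V} (ha : a ∈ powTail br y c)
    (hb : b ∈ powTail br y 0) : br a b ∈ powTail br y (c + 1) :=
  br_mem_powTail_succ_of_generators
    (fun j hj i _ => powTail_antitone (by omega) (br_rightPow_mem_powTail hy hgrade hleib i j))
    ha hb

theorem powTail_zero_eq_top
    (hgen : ∀ P : Submodule K V, y ∈ P → (∀ a ∈ P, ∀ b ∈ P, br a b ∈ P) → P = ⊤) :
    powTail br y 0 = ⊤ :=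
  hgen _ (rightPow_mem_powTail le_rfl) fun _ ha _ hb =>
    powTail_antitone (Nat.zero_le 1) (br_mem_powTail_succ hy hgrade hleib ha hb)

theorem dcs_eq_powTail (htop : powTail br y 0 = ⊤) (k : ℕ) :
    dcs K (fun u v => br u v) k = powTail br y k := by
  induction k with
  | zero => exact htop.symm
  | succ k ih =>
    refine le_antisymm (span_le.2 ?_) (span_le.2 ?_)
    · rintro _ ⟨a, ha, b, rfl⟩
      exact br_mem_powTail_succ hy hgrade hleib (ih ▸ ha) (htop ▸ mem_top)
    · rintro _ ⟨_ | j, hj, rfl⟩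
      · exact absurd hj (Nat.not_succ_le_zero k)
      · have hj' : rightPow br y j ∈ dcs K (fun u v => br u v) k :=
          ih ▸ rightPow_mem_powTail (Nat.le_of_succ_le_succ hj)
        exact subset_span ⟨rightPow br y j, hj', y, rfl⟩

theorem rightPow_eq_zero_of_le (htop : powTail br y 0 = ⊤) {N j : ℕ}
    (hnil : dcs K (fun u v => br u v) N = ⊥) (hj : N ≤ j) : rightPow br y j = 0 := by
  rw [← mem_bot K, ← hnil, dcs_eq_powTail hy hgrade hleib htop]
  exact rightPow_mem_powTail hj

end Graded

end LeibnizSuperalgebra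

open LeibnizSuperalgebra in
theorem single_generated_odd_maximal_nilindex_dims_general
    {V : Type*} [AddCommGroup V] [Module ℂ V]
    (L0 L1 : Submodule ℂ V) (br : V →ₗ[ℂ] V →ₗ[ℂ] V)
    (hinf : L0 ⊓ L1 = ⊥)
    (hgrade : ∀ (a b : Bool), ∀ x ∈ cond a L1 L0, ∀ y ∈ cond b L1 L0,
      br x y ∈ cond (Bool.xor a b) L1 L0)
    (hleib : ∀ (a b : Bool) (x : V), ∀ y ∈ cond a L1 L0, ∀ z ∈ cond b L1 L0,
      br x (br y z) = br (br x y) z - (cond (a && b) (-1 : ℂ) 1) • br (br x z) y)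
    (n m : ℕ)
    (hdim0 : Module.finrank ℂ L0 = n) (hdim1 : Module.finrank ℂ L1 = m)
    (y : V) (hy : y ∈ L1)
    (hgen : ∀ P : Submodule ℂ V,
      y ∈ P → (∀ a ∈ P, ∀ b ∈ P, br a b ∈ P) → P = ⊤)
    (hnil : dcs ℂ (fun u v => br u v) (n + m) = ⊥) :
    (Even (n + m) → m = n) ∧ (Odd (n + m) → m = n + 1) ∧ (m = n ∨ m = n + 1) := by
  have htop := powTail_zero_eq_top hy hgrade hleib hgen
  have hcod := codisjoint_span_even_span_odd htop
    fun _ => rightPow_eq_zero_of_le hy hgrade hleib htop hnil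
  have hm := finrank_le_card_of_codisjoint_span (disjoint_iff.2 hinf) hcod
    (fun i => rightPow_two_mul_mem hy hgrade i) (fun i => rightPow_two_mul_add_one_mem hy hgrade i)
  have hn := finrank_le_card_of_codisjoint_span (disjoint_iff.2 hinf).symm hcod.symm
    (fun i => rightPow_two_mul_add_one_mem hy hgrade i) (fun i => rightPow_two_mul_mem hy hgrade i)
  rw [Fintype.card_fin, hdim1] at hm
  rw [Fintype.card_fin, hdim0] at hn
  refine ⟨fun ⟨k, hk⟩ => ?_, fun ⟨k, hk⟩ => ?_, ?_⟩ <;> omega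

/-- A single-generated complex nilpotent Leibniz superalgebra of dimension
`n + m` (`dim L₀ = n`, `dim L₁ = m`), generated by an odd element and of
maximal nilindex `n + m + 1`, satisfies `m = n` if `n + m` is even and
`m = n + 1` if `n + m` is odd; in particular `m = n` or `m = n + 1`. -/
theorem single_generated_odd_maximal_nilindex_dims
    {V : Type*} [AddCommGroup V] [Module ℂ V] [FiniteDimensional ℂ V]
    (L0 L1 : Submodule ℂ V) (br : V →ₗ[ℂ] V →ₗ[ℂ] V)
    (hsup : L0 ⊔ L1 = ⊤) (hinf : L0 ⊓ L1 = ⊥)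
    (hgrade : ∀ (a b : Bool), ∀ x ∈ cond a L1 L0, ∀ y ∈ cond b L1 L0,
      br x y ∈ cond (Bool.xor a b) L1 L0)
    (hleib : ∀ (a b : Bool) (x : V), ∀ y ∈ cond a L1 L0, ∀ z ∈ cond b L1 L0,
      br x (br y z) = br (br x y) z - (cond (a && b) (-1 : ℂ) 1) • br (br x z) y)
    (n m : ℕ) (hnm : 1 ≤ n + m)
    (hdim0 : Module.finrank ℂ L0 = n) (hdim1 : Module.finrank ℂ L1 = m)
    (y : V) (hy : y ∈ L1)
    (hgen : ∀ P : Submodule ℂ V,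
      y ∈ P → (∀ a ∈ P, ∀ b ∈ P, br a b ∈ P) → P = ⊤)
    (hnil : dcs ℂ (fun u v => br u v) (n + m) = ⊥)
    (hnil' : dcs ℂ (fun u v => br u v) (n + m - 1) ≠ ⊥) :
    (Even (n + m) → m = n) ∧ (Odd (n + m) → m = n + 1) ∧ (m = n ∨ m = n + 1) :=
  single_generated_odd_maximal_nilindex_dims_general L0 L1 br hinf hgrade hleib n m hdim0 hdim1 y hy
    hgen hnil
end

section
/- Let L be a Leibniz superalgebra over ℂ with even basis x₁,...,x_n and odd basis y₁,...,y_{n+1} satisfying [x_i, x₁] = x_{i+1} (1 ≤ i ≤ n-1), [y_j, x₁] = y_{j+1} (1 ≤ j ≤ n-1), [x_i, y₁] = ½ y_{i+1} (1 ≤ i ≤ n-1), [y_j, y₁] = x_j (1 ≤ j ≤ n), and with [y_{n+1}, y₁] = b x_n for some b ∈ ℂ. Then applying the graded Leibniz identity to [y_{n+1}, [y₁, x₁]] and [y_{n+1}, [x₁, y₁]] forces [y_{n+1}, y₂] = [[y_{n+1}, y₁], x₁] and simultaneously [y_{n+1}, y₂] = -2[[y_{n+1}, y₁], x₁]; hence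 [[y_{n+1}, y₁], x₁] = 0 and [y_{n+1}, y_i] = 0 for 2 ≤ i ≤ n. -/
/-- In a Leibniz superalgebra with adapted basis relations
`[x_i,x₁] = x_{i+1}`, `[y_j,x₁] = y_{j+1}`, `[x_i,y₁] = ½y_{i+1}`,
`[y_j,y₁] = x_j` and `[y_{n+1},y₁] = b·x_n`, the graded Leibniz identity
applied to `[y_{n+1},[y₁,x₁]]` and `[y_{n+1},[x₁,y₁]]` forces
`[y_{n+1},y₂] = [[y_{n+1},y₁],x₁]` and `[y_{n+1},y₂] = -2[[y_{n+1},y₁],x₁]`,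
hence `[[y_{n+1},y₁],x₁] = 0` and `[y_{n+1},y_i] = 0` for `2 ≤ i ≤ n`. -/
theorem bracket_yn1_yi_eq_zero
    {V : Type*} [AddCommGroup V] [Module ℂ V]
    (L0 L1 : Submodule ℂ V) (br : V →ₗ[ℂ] V →ₗ[ℂ] V)
    (hgrade : ∀ (a b : Bool), ∀ x ∈ cond a L1 L0, ∀ y ∈ cond b L1 L0,
      br x y ∈ cond (Bool.xor a b) L1 L0)
    (hleib : ∀ (a b : Bool) (x : V), ∀ y ∈ cond a L1 L0, ∀ z ∈ cond b L1 L0,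
      br x (br y z) = br (br x y) z - (cond (a && b) (-1 : ℂ) 1) • br (br x z) y)
    (n : ℕ) (hn : 2 ≤ n) (x y : ℕ → V) (b : ℂ)
    (hx0 : ∀ i, 1 ≤ i → i ≤ n → x i ∈ L0)
    (hy1 : ∀ j, 1 ≤ j → j ≤ n + 1 → y j ∈ L1)
    (hxx : ∀ i, 1 ≤ i → i ≤ n - 1 → br (x i) (x 1) = x (i + 1))
    (hyx : ∀ j, 1 ≤ j → j ≤ n - 1 → br (y j) (x 1) = y (j + 1))
    (hynx : br (y n) (x 1) = 0)
    (hyn1x : br (y (n + 1)) (x 1) = 0)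
    (hxy : ∀ i, 1 ≤ i → i ≤ n - 1 → br (x i) (y 1) = (2⁻¹ : ℂ) • y (i + 1))
    (hyy : ∀ j, 1 ≤ j → j ≤ n → br (y j) (y 1) = x j)
    (hyn1y1 : br (y (n + 1)) (y 1) = b • x n) :
    br (y (n + 1)) (y 2) = br (br (y (n + 1)) (y 1)) (x 1) ∧
    br (y (n + 1)) (y 2) = (-2 : ℂ) • br (br (y (n + 1)) (y 1)) (x 1) ∧
    br (br (y (n + 1)) (y 1)) (x 1) = 0 ∧
    (∀ i, 2 ≤ i → i ≤ n → br (y (n + 1)) (y i) = 0) := by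

  have hy1m : y 1 ∈ L1 := hy1 1 le_rfl (by omega)
  have hx1m : x 1 ∈ L0 := hx0 1 le_rfl (by omega)
  have hy2 : br (y 1) (x 1) = y 2 := hyx 1 le_rfl (by omega)
  -- Part 1
  have h1 : br (y (n + 1)) (y 2) = br (br (y (n + 1)) (y 1)) (x 1) := by
    have := hleib true false (y (n + 1)) (y 1) hy1m (x 1) hx1m
    simpa [hy2, hyn1x] using this
  -- Part 2
  have hxy1 : br (x 1) (y 1) = (2⁻¹ : ℂ) • y 2 := hxy 1 le_rfl (by omega)
  have h2 : br (y (n + 1)) (y 2) = (-2 : ℂ) • br (br (y (n + 1)) (y 1)) (x 1) := by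
    have h := hleib false true (y (n + 1)) (x 1) hx1m (y 1) hy1m
    rw [hxy1, hyn1x, map_smul] at h
    simp only [LinearMap.zero_apply, map_zero, cond, one_smul, zero_sub] at h
    have := congrArg (fun v => (2 : ℂ) • v) h
    simpa [smul_smul] using this
  have h3 : br (br (y (n + 1)) (y 1)) (x 1) = 0 := by
    have h := h1.symm.trans h2
    have : (3 : ℂ) • br (br (y (n + 1)) (y 1)) (x 1) = 0 := by
      have h0 := sub_eq_zero_of_eq h
      rw [show (3 : ℂ) = 1 - (-2) by norm_num, sub_smul, one_smul]
      exact h0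
    have h3' := congrArg (fun v => (3⁻¹ : ℂ) • v) this
    simpa [smul_smul] using h3'
  refine ⟨h1, h2, h3, ?_⟩
  intro i hi2 hin
  induction i with
  | zero => omega
  | succ k ih =>
    rcases Nat.lt_or_ge k 2 with hk | hk
    · have : k = 1 := by omega
      subst this
      rw [h1, h3]
    · have hkn : k ≤ n - 1 := by omega
      have hyk : br (y k) (x 1) = y (k + 1) := hyx k (by omega) hkn
      have hykm : y k ∈ L1 := hy1 k (by omega) (by omega)
      have h := hleib true false (y (n + 1)) (y k) hykm (x 1) hx1m
      rw [hyk, hyn1x, ih hk (by omega)] at h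
      simpa using h
end

section
/- Fix n ≥ 2 and parameters β_{⌊(n+5)/2⌋}, ..., β_{n+1} ∈ ℂ. Define a bracket on the (2n+2)-dimensional ℤ/2-graded complex vector space with even basis x₁,...,x_n and odd basis y₁,...,y_{n+2} by: [x_i,x₁] = x_{i+1} (1 ≤ i ≤ n-1); [y_j,x₁] = y_{j+1} (1 ≤ j ≤ n); [x_i,y₁] = ½y_{i+1} (1 ≤ i ≤ n); [y_j,y₁] = x_j (1 ≤ j ≤ n); [x_i,y_{n+2}] = Σ_{k=⌊(n+5)/2⌋}^{n+2-i} β_k y_{k-1+i} (1 ≤ i ≤ ⌊n/2⌋); [y_j,y_{n+2}] = -2Σ_{k=⌊(n+5)/2⌋}^{n+2-j} β_k x_{k-2+j} (1 ≤ j ≤ ⌊n/2⌋); all other products of basis elements zero. Then this bracket satisfies the graded Leibniz identity, defining a Leibniz superalgebra. -/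
open Finset

/-- The even basis vector `x_i` (`1 ≤ i ≤ n`). -/
def Xv (n : ℕ) (i : ℕ) : (Fin n → ℂ) × (Fin (n + 2) → ℂ) :=
  if h : 1 ≤ i ∧ i ≤ n then (Pi.single (⟨i - 1, by omega⟩ : Fin n) 1, 0) else 0

/-- The odd basis vector `y_j` (`1 ≤ j ≤ n+2`). -/
def Yv (n : ℕ) (j : ℕ) : (Fin n → ℂ) × (Fin (n + 2) → ℂ) :=
  if h : 1 ≤ j ∧ j ≤ n + 2 then (0, Pi.single (⟨j - 1, by omega⟩ : Fin (n + 2)) 1) else 0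

/-- Even part : vectors with vanishing odd component. -/
noncomputable def evenPart (n : ℕ) : Submodule ℂ ((Fin n → ℂ) × (Fin (n + 2) → ℂ)) :=
  LinearMap.ker (LinearMap.snd ℂ (Fin n → ℂ) (Fin (n + 2) → ℂ))

/-- Odd part : vectors with vanishing even component. -/
noncomputable def oddPart (n : ℕ) : Submodule ℂ ((Fin n → ℂ) × (Fin (n + 2) → ℂ)) :=
  LinearMap.ker (LinearMap.fst ℂ (Fin n → ℂ) (Fin (n + 2) → ℂ))

namespace LSaux

/-- coefficient function, zero outside the allowed window -/
def g (n : ℕ) (β : ℕ → ℂ) (k : ℕ) : ℂ := if (n+5)/2 ≤ k ∧ k ≤ n+1 then β k else 0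

lemma g_eq_zero {n : ℕ} {β : ℕ → ℂ} {k : ℕ} (h : k < (n+5)/2 ∨ n+1 < k) : g n β k = 0 :=
  if_neg (by omega)

def aget (n : ℕ) (a : Fin n → ℂ) (i : ℕ) : ℂ := if h : i < n then a ⟨i, h⟩ else 0
def bget (n : ℕ) (b : Fin (n+2) → ℂ) (j : ℕ) : ℂ := if h : j < n+2 then b ⟨j, h⟩ else 0

@[simp] lemma aget_add (n : ℕ) (a a' : Fin n → ℂ) (i : ℕ) :
    aget n (a + a') i = aget n a i + aget n a' i := by
  unfold aget; split <;> simp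

@[simp] lemma aget_smul (n : ℕ) (c : ℂ) (a : Fin n → ℂ) (i : ℕ) :
    aget n (c • a) i = c * aget n a i := by
  unfold aget; split <;> simp

@[simp] lemma aget_zero (n : ℕ) (i : ℕ) : aget n (0 : Fin n → ℂ) i = 0 := by
  unfold aget; split <;> simp

@[simp] lemma bget_add (n : ℕ) (a a' : Fin (n+2) → ℂ) (i : ℕ) :
    bget n (a + a') i = bget n a i + bget n a' i := by
  unfold bget; split <;> simp

@[simp] lemma bget_smul (n : ℕ) (c : ℂ) (a : Fin (n+2) → ℂ) (i : ℕ) :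
    bget n (c • a) i = c * bget n a i := by
  unfold bget; split <;> simp

@[simp] lemma bget_zero (n : ℕ) (i : ℕ) : bget n (0 : Fin (n+2) → ℂ) i = 0 := by
  unfold bget; split <;> simp

lemma aget_single (n t : ℕ) (ht : t < n) (m : ℕ) :
    aget n (Pi.single (⟨t, ht⟩ : Fin n) (1:ℂ)) m = if m = t then 1 else 0 := by
  unfold aget
  split
  · rw [Pi.single_apply]
    simp only [Fin.mk.injEq]
  · rw [eq_comm, if_neg (by omega)]

lemma bget_single (n t : ℕ) (ht : t < n+2) (m : ℕ) :
    bget n (Pi.single (⟨t, ht⟩ : Fin (n+2)) (1:ℂ)) m = if m = t then 1 else 0 := by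
  unfold bget
  split
  · rw [Pi.single_apply]
    simp only [Fin.mk.injEq]
  · rw [eq_comm, if_neg (by omega)]

def Rf (n : ℕ) (u : (Fin n → ℂ) × (Fin (n+2) → ℂ)) : (Fin n → ℂ) × (Fin (n+2) → ℂ) :=
  (fun p => if 1 ≤ (p:ℕ) then aget n u.1 ((p:ℕ)-1) else 0,
   fun q => if 1 ≤ (q:ℕ) ∧ (q:ℕ) ≤ n then bget n u.2 ((q:ℕ)-1) else 0)

noncomputable def Sf (n : ℕ) (u : (Fin n → ℂ) × (Fin (n+2) → ℂ)) : (Fin n → ℂ) × (Fin (n+2) → ℂ) :=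
  (fun p => bget n u.2 (p:ℕ),
   fun q => if 1 ≤ (q:ℕ) ∧ (q:ℕ) ≤ n then 2⁻¹ * aget n u.1 ((q:ℕ)-1) else 0)

noncomputable def Tf (n : ℕ) (β : ℕ → ℂ) (u : (Fin n → ℂ) × (Fin (n+2) → ℂ)) :
    (Fin n → ℂ) × (Fin (n+2) → ℂ) :=
  (fun p => -2 * ∑ j ∈ range (n/2), g n β ((p:ℕ)+2-j) * bget n u.2 j,
   fun q => if (q:ℕ) ≤ n then ∑ i ∈ range (n/2), g n β ((q:ℕ)+1-i) * aget n u.1 i else 0)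

lemma Rf_add (n : ℕ) (u u' : (Fin n → ℂ) × (Fin (n+2) → ℂ)) :
    Rf n (u + u') = Rf n u + Rf n u' := by
  unfold Rf
  refine Prod.ext ?_ ?_ <;> funext p <;> simp <;> split <;> simp

lemma Rf_smul (n : ℕ) (c : ℂ) (u : (Fin n → ℂ) × (Fin (n+2) → ℂ)) :
    Rf n (c • u) = c • Rf n u := by
  unfold Rf
  refine Prod.ext ?_ ?_ <;> funext p <;> simp <;> split <;> simp

lemma Sf_add (n : ℕ) (u u' : (Fin n → ℂ) × (Fin (n+2) → ℂ)) :
    Sf n (u + u') = Sf n u + Sf n u' := by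
  unfold Sf
  refine Prod.ext ?_ ?_ <;> funext p <;> simp <;> split <;> ring_nf <;> simp <;> ring

lemma Sf_smul (n : ℕ) (c : ℂ) (u : (Fin n → ℂ) × (Fin (n+2) → ℂ)) :
    Sf n (c • u) = c • Sf n u := by
  unfold Sf
  refine Prod.ext ?_ ?_ <;> funext p <;> simp <;> split <;> ring_nf <;> simp <;> ring

lemma Tf_add (n : ℕ) (β : ℕ → ℂ) (u u' : (Fin n → ℂ) × (Fin (n+2) → ℂ)) :
    Tf n β (u + u') = Tf n β u + Tf n β u' := by
  unfold Tf
  refine Prod.ext ?_ ?_ <;> funext p <;> simp [mul_add, Finset.sum_add_distrib] <;> split <;>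
    simp [mul_add, Finset.sum_add_distrib] <;> ring

lemma Tf_smul (n : ℕ) (β : ℕ → ℂ) (c : ℂ) (u : (Fin n → ℂ) × (Fin (n+2) → ℂ)) :
    Tf n β (c • u) = c • Tf n β u := by
  unfold Tf
  refine Prod.ext ?_ ?_ <;> funext p
  · simp [Finset.mul_sum]
    apply Finset.sum_congr rfl; intros; ring
  · simp [Finset.mul_sum]
    split
    · apply Finset.sum_congr rfl; intros; ring
    · simp

noncomputable def brf (n : ℕ) (β : ℕ → ℂ) (u v : (Fin n → ℂ) × (Fin (n+2) → ℂ)) :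
    (Fin n → ℂ) × (Fin (n+2) → ℂ) :=
  aget n v.1 0 • Rf n u + bget n v.2 0 • Sf n u + bget n v.2 (n+1) • Tf n β u

noncomputable def br (n : ℕ) (β : ℕ → ℂ) :
    ((Fin n → ℂ) × (Fin (n+2) → ℂ)) →ₗ[ℂ] ((Fin n → ℂ) × (Fin (n+2) → ℂ)) →ₗ[ℂ]
      ((Fin n → ℂ) × (Fin (n+2) → ℂ)) :=
  LinearMap.mk₂ ℂ (brf n β)
    (by intro u u' v; unfold brf
        rw [Rf_add, Sf_add, Tf_add]
        module)
    (by intro c u v; unfold brf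
        rw [Rf_smul, Sf_smul, Tf_smul]
        module)
    (by intro u v v'; unfold brf
        simp only [Prod.fst_add, Prod.snd_add, Pi.add_apply, aget_add, bget_add]
        module)
    (by intro c u v; unfold brf
        simp only [Prod.smul_fst, Prod.smul_snd, Pi.smul_apply, aget_smul, bget_smul,
          smul_eq_mul]
        module)

lemma br_apply (n : ℕ) (β : ℕ → ℂ) (u v : (Fin n → ℂ) × (Fin (n+2) → ℂ)) :
    br n β u v =
      aget n v.1 0 • Rf n u + bget n v.2 0 • Sf n u + bget n v.2 (n+1) • Tf n β u := rfl

@[simp] lemma aget_neg (n : ℕ) (a : Fin n → ℂ) (i : ℕ) : aget n (-a) i = -aget n a i := by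
  unfold aget; split <;> simp

@[simp] lemma bget_neg (n : ℕ) (a : Fin (n+2) → ℂ) (i : ℕ) : bget n (-a) i = -bget n a i := by
  unfold bget; split <;> simp

lemma aget_sum {ι : Type*} (n : ℕ) (s : Finset ι) (f : ι → (Fin n → ℂ)) (m : ℕ) :
    aget n (∑ k ∈ s, f k) m = ∑ k ∈ s, aget n (f k) m := by
  unfold aget; split
  · simp [Finset.sum_apply]
  · simp

lemma bget_sum {ι : Type*} (n : ℕ) (s : Finset ι) (f : ι → (Fin (n+2) → ℂ)) (m : ℕ) :
    bget n (∑ k ∈ s, f k) m = ∑ k ∈ s, bget n (f k) m := by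
  unfold bget; split
  · simp [Finset.sum_apply]
  · simp

lemma aget_coe (n : ℕ) (a : Fin n → ℂ) (p : Fin n) : aget n a (p : ℕ) = a p := by
  unfold aget; rw [dif_pos p.isLt]

lemma bget_coe (n : ℕ) (b : Fin (n+2) → ℂ) (q : Fin (n+2)) : bget n b (q : ℕ) = b q := by
  unfold bget; rw [dif_pos q.isLt]

lemma pair_eq {n : ℕ} {u v : (Fin n → ℂ) × (Fin (n+2) → ℂ)}
    (h1 : ∀ m, aget n u.1 m = aget n v.1 m) (h2 : ∀ m, bget n u.2 m = bget n v.2 m) :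
    u = v := by
  refine Prod.ext (funext fun p => ?_) (funext fun q => ?_)
  · have := h1 p; rwa [aget_coe, aget_coe] at this
  · have := h2 q; rwa [bget_coe, bget_coe] at this

/-! component formulas -/

lemma Rf_fst (n : ℕ) (u : (Fin n → ℂ) × (Fin (n+2) → ℂ)) (m : ℕ) :
    aget n (Rf n u).1 m = if 1 ≤ m ∧ m < n then aget n u.1 (m-1) else 0 := by
  unfold aget Rf
  by_cases h : m < n
  · rw [dif_pos h]
    show (if 1 ≤ m then (if h' : m - 1 < n then u.1 ⟨m-1, h'⟩ else 0) else 0) = _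
    split_ifs <;> first | rfl | omega
  · rw [dif_neg h, if_neg (by omega)]

lemma Rf_snd (n : ℕ) (u : (Fin n → ℂ) × (Fin (n+2) → ℂ)) (m : ℕ) :
    bget n (Rf n u).2 m = if 1 ≤ m ∧ m ≤ n then bget n u.2 (m-1) else 0 := by
  unfold bget Rf
  by_cases h : m < n+2
  · rw [dif_pos h]
    show (if 1 ≤ m ∧ m ≤ n then (if h' : m - 1 < n+2 then u.2 ⟨m-1, h'⟩ else 0) else 0) = _
    rfl
  · rw [dif_neg h, if_neg (by omega)]

lemma Sf_fst (n : ℕ) (u : (Fin n → ℂ) × (Fin (n+2) → ℂ)) (m : ℕ) :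
    aget n (Sf n u).1 m = if m < n then bget n u.2 m else 0 := by
  unfold aget bget Sf
  by_cases h : m < n
  · rw [dif_pos h, if_pos h]
    show (if h' : m < n+2 then u.2 ⟨m, h'⟩ else 0) = _
    rfl
  · rw [dif_neg h, if_neg h]

lemma Sf_snd (n : ℕ) (u : (Fin n → ℂ) × (Fin (n+2) → ℂ)) (m : ℕ) :
    bget n (Sf n u).2 m = if 1 ≤ m ∧ m ≤ n then 2⁻¹ * aget n u.1 (m-1) else 0 := by
  unfold bget aget Sf
  by_cases h : m < n+2
  · rw [dif_pos h]
    show (if 1 ≤ m ∧ m ≤ n then 2⁻¹ * (if h' : m - 1 < n then u.1 ⟨m-1, h'⟩ else 0) else 0) = _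
    rfl
  · rw [dif_neg h, if_neg (by omega)]

lemma Tf_fst (n : ℕ) (β : ℕ → ℂ) (u : (Fin n → ℂ) × (Fin (n+2) → ℂ)) (m : ℕ) :
    aget n (Tf n β u).1 m =
      if m < n then -2 * ∑ j ∈ range (n/2), g n β (m+2-j) * bget n u.2 j else 0 := by
  unfold aget Tf
  by_cases h : m < n
  · rw [dif_pos h, if_pos h]
  · rw [dif_neg h, if_neg h]

lemma Tf_snd (n : ℕ) (β : ℕ → ℂ) (u : (Fin n → ℂ) × (Fin (n+2) → ℂ)) (m : ℕ) :
    bget n (Tf n β u).2 m =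
      if m ≤ n then ∑ i ∈ range (n/2), g n β (m+1-i) * aget n u.1 i else 0 := by
  unfold bget Tf
  by_cases h : m < n+2
  · rw [dif_pos h]
  · rw [dif_neg h, if_neg (by omega)]

/-! the five operator identities -/

lemma SS_eq (n : ℕ) (u : (Fin n → ℂ) × (Fin (n+2) → ℂ)) :
    Sf n (Sf n u) = (2⁻¹ : ℂ) • Rf n u := by
  apply pair_eq <;> intro m
  · rw [Sf_fst]
    simp only [Prod.smul_fst, aget_smul, Rf_fst, Sf_snd]
    split_ifs <;> first | ring1 | (exfalso; omega)
  · rw [Sf_snd]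
    simp only [Prod.smul_snd, bget_smul, Rf_snd, Sf_fst]
    split_ifs <;> first | ring1 | (exfalso; omega)

lemma SR_eq (n : ℕ) (u : (Fin n → ℂ) × (Fin (n+2) → ℂ)) :
    Sf n (Rf n u) = Rf n (Sf n u) := by
  apply pair_eq <;> intro m
  · rw [Sf_fst, Rf_fst, Rf_snd]
    simp only [Sf_fst]
    split_ifs <;> first | rfl | (exfalso; omega)
  · rw [Sf_snd, Rf_snd, Rf_fst]
    simp only [Sf_snd]
    have h22 : m - 1 - 1 = m - 2 := by omega
    have h22' : m - 2 = m - 1 - 1 := by omega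
    split_ifs <;> first | rfl | ring1 | (exfalso; omega) | (rw [h22']; ring1)

lemma TT_eq (n : ℕ) (β : ℕ → ℂ) (u : (Fin n → ℂ) × (Fin (n+2) → ℂ)) :
    Tf n β (Tf n β u) = 0 := by
  apply pair_eq <;> intro m
  · rw [Tf_fst]
    simp only [Prod.fst_zero, aget_zero]
    split_ifs with h
    · rw [Finset.sum_eq_zero, mul_zero]
      intro j hj
      rw [mem_range] at hj
      rw [Tf_snd, if_pos (by omega), Finset.sum_eq_zero, mul_zero]
      intro i hi
      rw [mem_range] at hi
      rw [g_eq_zero (Or.inl (by omega)), zero_mul]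
    · rfl
  · rw [Tf_snd]
    simp only [Prod.snd_zero, bget_zero]
    split_ifs with h
    · apply Finset.sum_eq_zero
      intro i hi
      rw [mem_range] at hi
      rw [Tf_fst, if_pos (by omega), Finset.sum_eq_zero, mul_zero, mul_zero]
      intro j hj
      rw [mem_range] at hj
      rw [g_eq_zero (Or.inl (by omega)), zero_mul]
    · rfl

lemma TR_eq (n : ℕ) (hn : 2 ≤ n) (β : ℕ → ℂ) (u : (Fin n → ℂ) × (Fin (n+2) → ℂ)) :
    Tf n β (Rf n u) = Rf n (Tf n β u) := by
  obtain ⟨mm, hmm⟩ : ∃ mm, n/2 = mm+1 := ⟨n/2-1, by omega⟩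
  apply pair_eq <;> intro m
  · rw [Tf_fst, Rf_fst]
    simp only [Rf_snd, Tf_fst]
    by_cases h : m < n
    · have e1 : ∑ j ∈ range mm,
          (g n β (m+2-(j+1)) * if 1 ≤ j+1 ∧ j+1 ≤ n then bget n u.2 (j+1-1) else 0)
          = ∑ j ∈ range mm, g n β (m+1-j) * bget n u.2 j := by
        refine Finset.sum_congr rfl (fun j hj => ?_)
        rw [mem_range] at hj
        rw [if_pos (show 1 ≤ j+1 ∧ j+1 ≤ n by omega),
          show m+2-(j+1) = m+1-j from by omega, show j+1-1 = j from by omega]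
      rw [if_pos h, hmm, Finset.sum_range_succ', e1,
        if_neg (show ¬(1 ≤ 0 ∧ 0 ≤ n) from by omega), mul_zero]
      by_cases hm1 : 1 ≤ m
      · have e2 : ∑ j ∈ range (mm+1), g n β (m-1+2-j) * bget n u.2 j
            = ∑ j ∈ range (mm+1), g n β (m+1-j) * bget n u.2 j :=
          Finset.sum_congr rfl (fun j hj => by rw [show m-1+2-j = m+1-j from by omega])
        rw [if_pos (show 1 ≤ m ∧ m < n from ⟨hm1, h⟩), if_pos (by omega), e2,
          Finset.sum_range_succ,
          g_eq_zero (Or.inl (show m+1-mm < (n+5)/2 from by omega)), zero_mul]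
      · rw [if_neg (by omega)]
        rw [Finset.sum_eq_zero (fun j hj => by
          rw [g_eq_zero (Or.inl (show m+1-j < (n+5)/2 from by omega)), zero_mul])]
        ring1
    · rw [if_neg h, if_neg (by omega)]
  · rw [Tf_snd, Rf_snd]
    simp only [Rf_fst, Tf_snd]
    by_cases h : m ≤ n
    · have e1 : ∑ i ∈ range mm,
          (g n β (m+1-(i+1)) * if 1 ≤ i+1 ∧ i+1 < n then aget n u.1 (i+1-1) else 0)
          = ∑ i ∈ range mm, g n β (m-i) * aget n u.1 i := by
        refine Finset.sum_congr rfl (fun i hi => ?_)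
        rw [mem_range] at hi
        rw [if_pos (show 1 ≤ i+1 ∧ i+1 < n by omega),
          show m+1-(i+1) = m-i from by omega, show i+1-1 = i from by omega]
      rw [if_pos h, hmm, Finset.sum_range_succ', e1,
        if_neg (show ¬(1 ≤ 0 ∧ 0 < n) from by omega), mul_zero]
      by_cases hm1 : 1 ≤ m
      · have e2 : ∑ i ∈ range (mm+1), g n β (m-1+1-i) * aget n u.1 i
            = ∑ i ∈ range (mm+1), g n β (m-i) * aget n u.1 i :=
          Finset.sum_congr rfl (fun i hi => by rw [show m-1+1-i = m-i from by omega])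
        rw [if_pos (show 1 ≤ m ∧ m ≤ n from ⟨hm1, h⟩), if_pos (by omega), e2,
          Finset.sum_range_succ,
          g_eq_zero (Or.inl (show m-mm < (n+5)/2 from by omega)), zero_mul]
      · rw [if_neg (by omega)]
        rw [Finset.sum_eq_zero (fun i hi => by
          rw [g_eq_zero (Or.inl (show m-i < (n+5)/2 from by omega)), zero_mul])]
        ring1
    · rw [if_neg h, if_neg (by omega)]

lemma TS_eq (n : ℕ) (hn : 2 ≤ n) (β : ℕ → ℂ) (u : (Fin n → ℂ) × (Fin (n+2) → ℂ)) :
    Tf n β (Sf n u) = (-1 : ℂ) • Sf n (Tf n β u) := by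
  obtain ⟨mm, hmm⟩ : ∃ mm, n/2 = mm+1 := ⟨n/2-1, by omega⟩
  apply pair_eq <;> intro m
  · rw [Tf_fst]
    simp only [Prod.smul_fst, aget_smul, Sf_fst, Sf_snd, Tf_snd]
    by_cases h : m < n
    · have e1 : ∑ j ∈ range mm,
          (g n β (m+2-(j+1)) * if 1 ≤ j+1 ∧ j+1 ≤ n then 2⁻¹ * aget n u.1 (j+1-1) else 0)
          = ∑ j ∈ range mm, 2⁻¹ * (g n β (m+1-j) * aget n u.1 j) := by
        refine Finset.sum_congr rfl (fun j hj => ?_)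
        rw [mem_range] at hj
        rw [if_pos (show 1 ≤ j+1 ∧ j+1 ≤ n by omega),
          show m+2-(j+1) = m+1-j from by omega, show j+1-1 = j from by omega]
        ring1
      rw [if_pos h, if_pos h, if_pos (by omega), hmm, Finset.sum_range_succ', e1,
        if_neg (show ¬(1 ≤ 0 ∧ 0 ≤ n) from by omega), mul_zero, ← Finset.mul_sum,
        Finset.sum_range_succ,
        g_eq_zero (Or.inl (show m+1-mm < (n+5)/2 from by omega)), zero_mul]
      ring1
    · rw [if_neg h, if_neg h]
      ring1
  · rw [Tf_snd]
    simp only [Prod.smul_snd, bget_smul, Sf_snd, Sf_fst, Tf_fst]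
    by_cases h : m ≤ n
    · have e1 : ∑ i ∈ range (n/2),
          (g n β (m+1-i) * if i < n then bget n u.2 i else 0)
          = ∑ i ∈ range (n/2), g n β (m+1-i) * bget n u.2 i := by
        refine Finset.sum_congr rfl (fun i hi => ?_)
        rw [mem_range] at hi
        rw [if_pos (show i < n from by omega)]
      rw [if_pos h, e1]
      by_cases hm1 : 1 ≤ m
      · have e2 : ∑ j ∈ range (n/2), g n β (m-1+2-j) * bget n u.2 j
            = ∑ j ∈ range (n/2), g n β (m+1-j) * bget n u.2 j :=
          Finset.sum_congr rfl (fun j hj => by rw [show m-1+2-j = m+1-j from by omega])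
        rw [if_pos (show 1 ≤ m ∧ m ≤ n from ⟨hm1, h⟩), if_pos (by omega), e2]
        ring1
      · rw [if_neg (by omega)]
        rw [Finset.sum_eq_zero (fun i hi => by
          rw [g_eq_zero (Or.inl (show m+1-i < (n+5)/2 from by omega)), zero_mul])]
        ring1
    · rw [if_neg h, if_neg (by omega)]
      ring1

/-! φ-values of brackets -/

lemma phi1_br (n : ℕ) (hn : 2 ≤ n) (β : ℕ → ℂ) (v w : (Fin n → ℂ) × (Fin (n+2) → ℂ)) :
    aget n (br n β v w).1 0 = bget n v.2 0 * bget n w.2 0 := by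
  rw [br_apply]
  simp only [Prod.fst_add, Prod.smul_fst, aget_add, aget_smul]
  rw [Rf_fst, Sf_fst, Tf_fst, if_neg (by omega), if_pos (by omega), if_pos (by omega),
    Finset.sum_eq_zero (fun j hj => by
      rw [g_eq_zero (Or.inl (show 0+2-j < (n+5)/2 from by omega)), zero_mul])]
  ring1

lemma phi2_br (n : ℕ) (hn : 2 ≤ n) (β : ℕ → ℂ) (v w : (Fin n → ℂ) × (Fin (n+2) → ℂ)) :
    bget n (br n β v w).2 0 = 0 := by
  rw [br_apply]
  simp only [Prod.snd_add, Prod.smul_snd, bget_add, bget_smul]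
  rw [Rf_snd, Sf_snd, Tf_snd, if_neg (by omega), if_neg (by omega), if_pos (by omega),
    Finset.sum_eq_zero (fun i hi => by
      rw [g_eq_zero (Or.inl (show 0+1-i < (n+5)/2 from by omega)), zero_mul])]
  ring1

lemma phi3_br (n : ℕ) (hn : 2 ≤ n) (β : ℕ → ℂ) (v w : (Fin n → ℂ) × (Fin (n+2) → ℂ)) :
    bget n (br n β v w).2 (n+1) = 0 := by
  rw [br_apply]
  simp only [Prod.snd_add, Prod.smul_snd, bget_add, bget_smul]
  rw [Rf_snd, Sf_snd, Tf_snd, if_neg (by omega), if_neg (by omega), if_neg (by omega)]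
  ring1

/-! parity of the operators -/

lemma Rf_fst_zero {n : ℕ} {u : (Fin n → ℂ) × (Fin (n+2) → ℂ)} (h : u.1 = 0) :
    (Rf n u).1 = 0 := by funext p; simp [Rf, h]

lemma Rf_snd_zero {n : ℕ} {u : (Fin n → ℂ) × (Fin (n+2) → ℂ)} (h : u.2 = 0) :
    (Rf n u).2 = 0 := by funext q; simp [Rf, h]

lemma Sf_fst_zero {n : ℕ} {u : (Fin n → ℂ) × (Fin (n+2) → ℂ)} (h : u.2 = 0) :
    (Sf n u).1 = 0 := by funext p; simp [Sf, h]

lemma Sf_snd_zero {n : ℕ} {u : (Fin n → ℂ) × (Fin (n+2) → ℂ)} (h : u.1 = 0) :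
    (Sf n u).2 = 0 := by funext q; simp [Sf, h]

lemma Tf_fst_zero {n : ℕ} {β : ℕ → ℂ} {u : (Fin n → ℂ) × (Fin (n+2) → ℂ)} (h : u.2 = 0) :
    (Tf n β u).1 = 0 := by funext p; simp [Tf, h]

lemma Tf_snd_zero {n : ℕ} {β : ℕ → ℂ} {u : (Fin n → ℂ) × (Fin (n+2) → ℂ)} (h : u.1 = 0) :
    (Tf n β u).2 = 0 := by funext q; simp [Tf, h]

/-! basis vectors -/

lemma Xv_snd (n i : ℕ) : (Xv n i).2 = 0 := by unfold Xv; split <;> rfl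

lemma Yv_fst (n j : ℕ) : (Yv n j).1 = 0 := by unfold Yv; split <;> rfl

lemma aget_Xv (n i : ℕ) (h1 : 1 ≤ i) (h2 : i ≤ n) (m : ℕ) :
    aget n (Xv n i).1 m = if m = i-1 then 1 else 0 := by
  unfold Xv
  rw [dif_pos ⟨h1, h2⟩]
  exact aget_single n (i-1) (by omega) m

lemma bget_Yv (n j : ℕ) (h1 : 1 ≤ j) (h2 : j ≤ n+2) (m : ℕ) :
    bget n (Yv n j).2 m = if m = j-1 then 1 else 0 := by
  unfold Yv
  rw [dif_pos ⟨h1, h2⟩]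
  exact bget_single n (j-1) (by omega) m

/-! bracket with distinguished basis vectors -/

lemma br_Xv1 (n : ℕ) (hn : 2 ≤ n) (β : ℕ → ℂ) (u : (Fin n → ℂ) × (Fin (n+2) → ℂ)) :
    br n β u (Xv n 1) = Rf n u := by
  rw [br_apply, aget_Xv n 1 le_rfl (by omega), Xv_snd, bget_zero, bget_zero,
    if_pos (by omega)]
  module

lemma br_Yv1 (n : ℕ) (hn : 2 ≤ n) (β : ℕ → ℂ) (u : (Fin n → ℂ) × (Fin (n+2) → ℂ)) :
    br n β u (Yv n 1) = Sf n u := by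
  rw [br_apply, Yv_fst, aget_zero, bget_Yv n 1 le_rfl (by omega),
    bget_Yv n 1 le_rfl (by omega), if_pos (by omega), if_neg (by omega)]
  module

lemma br_Yvtop (n : ℕ) (hn : 2 ≤ n) (β : ℕ → ℂ) (u : (Fin n → ℂ) × (Fin (n+2) → ℂ)) :
    br n β u (Yv n (n+2)) = Tf n β u := by
  rw [br_apply, Yv_fst, aget_zero, bget_Yv n (n+2) (by omega) le_rfl,
    bget_Yv n (n+2) (by omega) le_rfl, if_neg (show ¬((0:ℕ) = n+2-1) by omega),
    if_pos (show n+1 = n+2-1 by omega)]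
  module

lemma br_Xv_mid (n : ℕ) (β : ℕ → ℂ) (u : (Fin n → ℂ) × (Fin (n+2) → ℂ))
    (j : ℕ) (h1 : 2 ≤ j) (h2 : j ≤ n) : br n β u (Xv n j) = 0 := by
  rw [br_apply, aget_Xv n j (by omega) h2, Xv_snd, bget_zero, bget_zero,
    if_neg (by omega)]
  module

lemma br_Yv_mid (n : ℕ) (β : ℕ → ℂ) (u : (Fin n → ℂ) × (Fin (n+2) → ℂ))
    (j : ℕ) (h1 : 2 ≤ j) (h2 : j ≤ n+1) : br n β u (Yv n j) = 0 := by
  rw [br_apply, Yv_fst, aget_zero, bget_Yv n j (by omega) (by omega),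
    bget_Yv n j (by omega) (by omega), if_neg (by omega), if_neg (by omega)]
  module

lemma fst_sum {ι : Type*} (n : ℕ) (s : Finset ι)
    (f : ι → (Fin n → ℂ) × (Fin (n+2) → ℂ)) :
    (∑ k ∈ s, f k).1 = ∑ k ∈ s, (f k).1 :=
  map_sum (LinearMap.fst ℂ (Fin n → ℂ) (Fin (n+2) → ℂ)) f s

lemma snd_sum {ι : Type*} (n : ℕ) (s : Finset ι)
    (f : ι → (Fin n → ℂ) × (Fin (n+2) → ℂ)) :
    (∑ k ∈ s, f k).2 = ∑ k ∈ s, (f k).2 :=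
  map_sum (LinearMap.snd ℂ (Fin n → ℂ) (Fin (n+2) → ℂ)) f s

/-! structure constants -/

lemma Rf_Xv (n : ℕ) (i : ℕ) (h1 : 1 ≤ i) (h2 : i ≤ n-1) :
    Rf n (Xv n i) = Xv n (i+1) := by
  have h2' : i ≤ n := by omega
  apply pair_eq <;> intro m
  · rw [Rf_fst, aget_Xv n i h1 h2', aget_Xv n (i+1) (by omega) (by omega)]
    split_ifs <;> first | rfl | (exfalso; omega)
  · rw [Rf_snd]
    simp [Xv_snd]

lemma Rf_Yv (n : ℕ) (j : ℕ) (h1 : 1 ≤ j) (h2 : j ≤ n) :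
    Rf n (Yv n j) = Yv n (j+1) := by
  apply pair_eq <;> intro m
  · rw [Rf_fst]
    simp [Yv_fst]
  · rw [Rf_snd, bget_Yv n j h1 (by omega), bget_Yv n (j+1) (by omega) (by omega)]
    split_ifs <;> first | rfl | (exfalso; omega)

lemma Sf_Xv (n : ℕ) (i : ℕ) (h1 : 1 ≤ i) (h2 : i ≤ n) :
    Sf n (Xv n i) = (2⁻¹ : ℂ) • Yv n (i+1) := by
  apply pair_eq <;> intro m
  · rw [Sf_fst]
    simp [Xv_snd, Yv_fst]
  · rw [Sf_snd, aget_Xv n i h1 h2]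
    simp only [Prod.smul_snd, bget_smul]
    rw [bget_Yv n (i+1) (by omega) (by omega)]
    split_ifs <;> first | ring1 | (exfalso; omega)

lemma Sf_Yv (n : ℕ) (j : ℕ) (h1 : 1 ≤ j) (h2 : j ≤ n) :
    Sf n (Yv n j) = Xv n j := by
  apply pair_eq <;> intro m
  · rw [Sf_fst, bget_Yv n j h1 (by omega), aget_Xv n j h1 h2]
    split_ifs <;> first | rfl | (exfalso; omega)
  · rw [Sf_snd]
    simp [Yv_fst, Xv_snd]

lemma Tf_Xv (n : ℕ) (hn : 2 ≤ n) (β : ℕ → ℂ) (i : ℕ) (h1 : 1 ≤ i) (h2 : i ≤ n/2) :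
    Tf n β (Xv n i) = ∑ k ∈ Icc ((n+5)/2) (n+2-i), β k • Yv n (k-1+i) := by
  apply pair_eq <;> intro m
  · rw [Tf_fst]
    simp [Xv_snd, Yv_fst, fst_sum, aget_sum]
  · rw [Tf_snd, snd_sum, bget_sum]
    simp only [aget_Xv n i h1 (by omega), mul_ite, mul_one, mul_zero]
    have e2 : ∀ k ∈ Icc ((n+5)/2) (n+2-i),
        bget n ((β k • Yv n (k-1+i)).2) m = (if k = m+2-i then β k else 0) := by
      intro k hk
      rw [mem_Icc] at hk
      rw [Prod.smul_snd, bget_smul, bget_Yv n (k-1+i) (by omega) (by omega),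
        mul_ite, mul_one, mul_zero]
      exact if_congr (by constructor <;> omega) rfl rfl
    rw [Finset.sum_congr rfl e2, Finset.sum_ite_eq' (Icc ((n+5)/2) (n+2-i)) (m+2-i) β]
    simp only [mem_Icc]
    by_cases h : m ≤ n
    · rw [if_pos h, Finset.sum_ite_eq' (range (n/2)) (i-1) (fun i' => g n β (m+1-i')),
        if_pos (by rw [mem_range]; omega), show m+1-(i-1) = m+2-i from by omega]
      unfold g
      split_ifs <;> first | rfl | (exfalso; omega)
    · rw [if_neg h, if_neg (by omega)]

lemma Tf_Yv (n : ℕ) (hn : 2 ≤ n) (β : ℕ → ℂ) (j : ℕ) (h1 : 1 ≤ j) (h2 : j ≤ n/2) :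
    Tf n β (Yv n j) = (-2 : ℂ) • ∑ k ∈ Icc ((n+5)/2) (n+2-j), β k • Xv n (k-2+j) := by
  apply pair_eq <;> intro m
  · rw [Tf_fst]
    simp only [Prod.smul_fst, aget_smul, fst_sum, aget_sum, smul_eq_mul]
    simp only [bget_Yv n j h1 (by omega), mul_ite, mul_one, mul_zero]
    have e2 : ∀ k ∈ Icc ((n+5)/2) (n+2-j),
        (β k * aget n (Xv n (k-2+j)).1 m) = (if k = m+3-j then β k else 0) := by
      intro k hk
      rw [mem_Icc] at hk
      rw [aget_Xv n (k-2+j) (by omega) (by omega), mul_ite, mul_one, mul_zero]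
      exact if_congr (by constructor <;> omega) rfl rfl
    rw [Finset.sum_congr rfl e2, Finset.sum_ite_eq' (Icc ((n+5)/2) (n+2-j)) (m+3-j) β]
    simp only [mem_Icc]
    by_cases h : m < n
    · rw [if_pos h, Finset.sum_ite_eq' (range (n/2)) (j-1) (fun j' => g n β (m+2-j')),
        if_pos (by rw [mem_range]; omega), show m+2-(j-1) = m+3-j from by omega]
      unfold g
      split_ifs <;> first | ring1 | (exfalso; omega)
    · rw [if_neg h, if_neg (by omega)]
      ring1
  · rw [Tf_snd]
    simp [Yv_fst, Xv_snd, snd_sum, bget_sum]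

/-! vanishing products -/

lemma Rf_Xv_top (n : ℕ) (hn : 2 ≤ n) : Rf n (Xv n n) = 0 := by
  apply pair_eq <;> intro m
  · rw [Rf_fst, aget_Xv n n (by omega) le_rfl]
    simp only [Prod.fst_zero, aget_zero]
    split_ifs <;> first | rfl | (exfalso; omega)
  · rw [Rf_snd]
    simp [Xv_snd]

lemma Rf_Yv_top (n : ℕ) (j : ℕ) (h1 : n+1 ≤ j) (h2 : j ≤ n+2) : Rf n (Yv n j) = 0 := by
  apply pair_eq <;> intro m
  · rw [Rf_fst]
    simp [Yv_fst]
  · rw [Rf_snd, bget_Yv n j (by omega) h2]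
    simp only [Prod.snd_zero, bget_zero]
    split_ifs <;> first | rfl | (exfalso; omega)

lemma Sf_Yv_top (n : ℕ) (j : ℕ) (h1 : n+1 ≤ j) (h2 : j ≤ n+2) : Sf n (Yv n j) = 0 := by
  apply pair_eq <;> intro m
  · rw [Sf_fst, bget_Yv n j (by omega) h2]
    simp only [Prod.fst_zero, aget_zero]
    split_ifs <;> first | rfl | (exfalso; omega)
  · rw [Sf_snd]
    simp [Yv_fst]

lemma Tf_Xv_big (n : ℕ) (β : ℕ → ℂ) (i : ℕ) (h1 : n/2 < i) (h2 : i ≤ n) :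
    Tf n β (Xv n i) = 0 := by
  apply pair_eq <;> intro m
  · rw [Tf_fst]
    simp [Xv_snd]
  · rw [Tf_snd]
    simp only [Prod.snd_zero, bget_zero]
    simp only [aget_Xv n i (by omega) h2, mul_ite, mul_one, mul_zero]
    rw [Finset.sum_ite_eq' (range (n/2)) (i-1) (fun i' => g n β (m+1-i'))]
    simp only [mem_range]
    rw [if_neg (show ¬(i-1 < n/2) by omega)]
    simp

lemma Tf_Yv_big (n : ℕ) (β : ℕ → ℂ) (j : ℕ) (h1 : n/2 < j) (h2 : j ≤ n+2) :
    Tf n β (Yv n j) = 0 := by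
  apply pair_eq <;> intro m
  · rw [Tf_fst]
    simp only [Prod.fst_zero, aget_zero]
    simp only [bget_Yv n j (by omega) h2, mul_ite, mul_one, mul_zero]
    rw [Finset.sum_ite_eq' (range (n/2)) (j-1) (fun j' => g n β (m+2-j'))]
    simp only [mem_range]
    rw [if_neg (show ¬(j-1 < n/2) by omega)]
    simp
  · rw [Tf_snd]
    simp [Yv_fst]

lemma Rf_br (n : ℕ) (β : ℕ → ℂ) (u v : (Fin n → ℂ) × (Fin (n+2) → ℂ)) :
    Rf n (br n β u v) = aget n v.1 0 • Rf n (Rf n u) + bget n v.2 0 • Rf n (Sf n u)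
      + bget n v.2 (n+1) • Rf n (Tf n β u) := by
  rw [br_apply, Rf_add, Rf_add, Rf_smul, Rf_smul, Rf_smul]

lemma Sf_br (n : ℕ) (β : ℕ → ℂ) (u v : (Fin n → ℂ) × (Fin (n+2) → ℂ)) :
    Sf n (br n β u v) = aget n v.1 0 • Sf n (Rf n u) + bget n v.2 0 • Sf n (Sf n u)
      + bget n v.2 (n+1) • Sf n (Tf n β u) := by
  rw [br_apply, Sf_add, Sf_add, Sf_smul, Sf_smul, Sf_smul]

lemma Tf_br (n : ℕ) (β : ℕ → ℂ) (u v : (Fin n → ℂ) × (Fin (n+2) → ℂ)) :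
    Tf n β (br n β u v) = aget n v.1 0 • Tf n β (Rf n u) + bget n v.2 0 • Tf n β (Sf n u)
      + bget n v.2 (n+1) • Tf n β (Tf n β u) := by
  rw [br_apply, Tf_add, Tf_add, Tf_smul, Tf_smul, Tf_smul]

end LSaux

open LSaux

/-- The family `L(β_{⌊(n+5)/2⌋}, …, β_{n+1})` from Lemma 3.3 is a Leibniz
superalgebra: there is a bilinear bracket with the prescribed structure
constants (all remaining products of basis vectors zero) that respects the
grading and satisfies the graded Leibniz identity. -/
theorem family_L_beta_is_leibniz_superalgebra
    (n : ℕ) (hn : 2 ≤ n) (β : ℕ → ℂ) :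
    ∃ br : ((Fin n → ℂ) × (Fin (n + 2) → ℂ)) →ₗ[ℂ]
        ((Fin n → ℂ) × (Fin (n + 2) → ℂ)) →ₗ[ℂ] ((Fin n → ℂ) × (Fin (n + 2) → ℂ)),
      (∀ i, 1 ≤ i → i ≤ n - 1 → br (Xv n i) (Xv n 1) = Xv n (i + 1)) ∧
      (∀ j, 1 ≤ j → j ≤ n → br (Yv n j) (Xv n 1) = Yv n (j + 1)) ∧
      (∀ i, 1 ≤ i → i ≤ n → br (Xv n i) (Yv n 1) = (2⁻¹ : ℂ) • Yv n (i + 1)) ∧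
      (∀ j, 1 ≤ j → j ≤ n → br (Yv n j) (Yv n 1) = Xv n j) ∧
      (∀ i, 1 ≤ i → i ≤ n / 2 →
        br (Xv n i) (Yv n (n + 2)) = ∑ k ∈ Icc ((n + 5) / 2) (n + 2 - i), β k • Yv n (k - 1 + i)) ∧
      (∀ j, 1 ≤ j → j ≤ n / 2 →
        br (Yv n j) (Yv n (n + 2))
          = (-2 : ℂ) • ∑ k ∈ Icc ((n + 5) / 2) (n + 2 - j), β k • Xv n (k - 2 + j)) ∧
      -- all other products of basis elements are zero
      br (Xv n n) (Xv n 1) = 0 ∧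
      (∀ i j, 1 ≤ i → i ≤ n → 2 ≤ j → j ≤ n → br (Xv n i) (Xv n j) = 0) ∧
      (∀ j i, 1 ≤ j → j ≤ n + 2 → 2 ≤ i → i ≤ n → br (Yv n j) (Xv n i) = 0) ∧
      br (Yv n (n + 1)) (Xv n 1) = 0 ∧ br (Yv n (n + 2)) (Xv n 1) = 0 ∧
      br (Yv n (n + 1)) (Yv n 1) = 0 ∧ br (Yv n (n + 2)) (Yv n 1) = 0 ∧
      (∀ i j, 1 ≤ i → i ≤ n → 2 ≤ j → j ≤ n + 1 → br (Xv n i) (Yv n j) = 0) ∧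
      (∀ i, n / 2 < i → i ≤ n → br (Xv n i) (Yv n (n + 2)) = 0) ∧
      (∀ i j, 1 ≤ i → i ≤ n + 2 → 2 ≤ j → j ≤ n + 1 → br (Yv n i) (Yv n j) = 0) ∧
      (∀ j, n / 2 < j → j ≤ n + 2 → br (Yv n j) (Yv n (n + 2)) = 0) ∧
      -- grading
      (∀ (a b : Bool), ∀ u ∈ cond a (oddPart n) (evenPart n),
        ∀ v ∈ cond b (oddPart n) (evenPart n),
        br u v ∈ cond (Bool.xor a b) (oddPart n) (evenPart n)) ∧
      -- graded Leibniz identity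
      (∀ (a b : Bool) (u : (Fin n → ℂ) × (Fin (n + 2) → ℂ)),
        ∀ v ∈ cond a (oddPart n) (evenPart n), ∀ w ∈ cond b (oddPart n) (evenPart n),
        br u (br v w) = br (br u v) w - (cond (a && b) (-1 : ℂ) 1) • br (br u w) v) := by
  refine ⟨LSaux.br n β, ?_, ?_, ?_, ?_, ?_, ?_, ?_, ?_, ?_, ?_, ?_, ?_, ?_, ?_, ?_, ?_,
    ?_, ?_, ?_⟩
  · intro i hi1 hi2
    rw [br_Xv1 n hn β, Rf_Xv n i hi1 hi2]
  · intro j hj1 hj2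
    rw [br_Xv1 n hn β, Rf_Yv n j hj1 hj2]
  · intro i hi1 hi2
    rw [br_Yv1 n hn β, Sf_Xv n i hi1 hi2]
  · intro j hj1 hj2
    rw [br_Yv1 n hn β, Sf_Yv n j hj1 hj2]
  · intro i hi1 hi2
    rw [br_Yvtop n hn β, Tf_Xv n hn β i hi1 hi2]
  · intro j hj1 hj2
    rw [br_Yvtop n hn β, Tf_Yv n hn β j hj1 hj2]
  · rw [br_Xv1 n hn β, Rf_Xv_top n hn]
  · intro i j hi1 hi2 hj1 hj2
    exact br_Xv_mid n β _ j hj1 hj2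
  · intro j i hj1 hj2 hi1 hi2
    exact br_Xv_mid n β _ i hi1 hi2
  · rw [br_Xv1 n hn β, Rf_Yv_top n (n+1) le_rfl (by omega)]
  · rw [br_Xv1 n hn β, Rf_Yv_top n (n+2) (by omega) le_rfl]
  · rw [br_Yv1 n hn β, Sf_Yv_top n (n+1) le_rfl (by omega)]
  · rw [br_Yv1 n hn β, Sf_Yv_top n (n+2) (by omega) le_rfl]
  · intro i j hi1 hi2 hj1 hj2
    exact br_Yv_mid n β _ j hj1 hj2
  · intro i hi1 hi2
    rw [br_Yvtop n hn β, Tf_Xv_big n β i hi1 hi2]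
  · intro i j hi1 hi2 hj1 hj2
    exact br_Yv_mid n β _ j hj1 hj2
  · intro j hj1 hj2
    rw [br_Yvtop n hn β, Tf_Yv_big n β j hj1 hj2]
  · -- grading
    intro a b u hu v hv
    cases a <;> cases b <;>
      simp only [Bool.cond_false, Bool.cond_true, Bool.xor_false, Bool.xor_true,
        Bool.false_xor, Bool.true_xor, Bool.not_true, Bool.not_false, cond] at * <;>
      simp only [evenPart, oddPart, LinearMap.mem_ker, LinearMap.snd_apply,
        LinearMap.fst_apply] at hu hv ⊢ <;>
      rw [br_apply] <;>
      simp only [Prod.fst_add, Prod.snd_add, Prod.smul_fst, Prod.smul_snd]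
    · rw [Rf_snd_zero hu, hv]
      simp
    · rw [Sf_fst_zero hu, Tf_fst_zero hu, hv]
      simp
    · rw [Rf_fst_zero hu, hv]
      simp
    · rw [Sf_snd_zero hu, Tf_snd_zero hu, hv]
      simp
  · -- Leibniz
    intro a b u v hv w hw
    rw [br_apply n β u (LSaux.br n β v w), phi1_br n hn β, phi2_br n hn β, phi3_br n hn β,
      br_apply n β (LSaux.br n β u v) w, br_apply n β (LSaux.br n β u w) v,
      Rf_br, Rf_br, Sf_br, Sf_br, Tf_br, Tf_br,
      SR_eq, SS_eq, TS_eq n hn, TR_eq n hn, TT_eq]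
    cases a <;> cases b <;>
      simp only [Bool.cond_false, Bool.cond_true, Bool.false_and, Bool.true_and,
        Bool.and_false, Bool.and_true, cond] at * <;>
      simp only [evenPart, oddPart, LinearMap.mem_ker, LinearMap.snd_apply,
        LinearMap.fst_apply] at hv hw <;>
      rw [hv, hw] <;>
      simp only [bget_zero, aget_zero, zero_smul, smul_zero, zero_mul, mul_zero,
        zero_add, add_zero] <;>
      module
end
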